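/- Let G be a group containing elements u₁,…,u₈, v₁,…,v₈ such that: (a) elements with distinct indices commute, i.e., uᵢ commutes with uⱼ and vⱼ, and vᵢ commutes with vⱼ, whenever i ≠ j; (b) uᵢ² = uⱼ², vᵢ² = vⱼ², and [uᵢ,vᵢ] = [uⱼ,vⱼ] for all i,j. Then the common commutator c = [u₁,v₁] satisfies c² = 1 and c is central in the subgroup generated by all uᵢ, vᵢ. -/

import Mathlib

/-!
Let `c = ⁅u i, v i⁆` be the common commutator. Given an index `j`, choose `k ≠ j`: then `u j` and
`v j` commute with `u k` and `v k`, hence with `c = ⁅u k, v k⁆`, so `c` is central in the subgroup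
generated by the `u i, v i`. In particular `c` commutes with `v = v 0`, so with `u = u 0`,
`u v² u⁻¹ = (u v u⁻¹)² = (c v)² = c² v²`. On the other hand `v² = v'²` for `v' = v 1`, which
commutes with `u`, so `u v² u⁻¹ = v²` and therefore `c² = 1`.
-/

open scoped commutatorElement

section

variable {G : Type*} [Group G]

theorem Commute.commutatorElement_right {a x y : G} (hx : Commute a x) (hy : Commute a y) :
    Commute a ⁅x, y⁆ := by
  rw [commutatorElement_def]
  exact ((hx.mul_right hy).mul_right hx.inv_right).mul_right hy.inv_right

theorem Commute.of_mem_closure {c g : G} {s : Set G} (hs : ∀ x ∈ s, Commute c x)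
    (hg : g ∈ Subgroup.closure s) : Commute c g := by
  have hc : c ∈ Subgroup.centralizer (Subgroup.closure s : Set G) := by
    rw [Subgroup.centralizer_closure]
    exact fun x hx => (hs x hx).symm
  exact (Subgroup.mem_centralizer_iff.mp hc g hg).symm

theorem conj_sq_eq_commutatorElement_sq_mul_sq {x y : G} (h : Commute ⁅x, y⁆ y) :
    x * y ^ 2 * x⁻¹ = ⁅x, y⁆ ^ 2 * y ^ 2 := by
  have hconj : x * y * x⁻¹ = ⁅x, y⁆ * y := by
    rw [commutatorElement_def]
    group
  calc x * y ^ 2 * x⁻¹ = (x * y * x⁻¹) ^ 2 := conj_pow.symm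
    _ = (⁅x, y⁆ * y) ^ 2 := by rw [hconj]
    _ = ⁅x, y⁆ ^ 2 * y ^ 2 := h.mul_pow 2

theorem commutatorElement_sq_eq_one {x y : G} (h : Commute ⁅x, y⁆ y) (hx : Commute x (y ^ 2)) :
    ⁅x, y⁆ ^ 2 = 1 := by
  have := conj_sq_eq_commutatorElement_sq_mul_sq h
  rw [hx.eq, mul_inv_cancel_right] at this
  exact mul_eq_right.mp this.symm

theorem commute_commutatorElement_of_mem_generators {ι : Type*} [Nontrivial ι] {u v : ι → G}
    (hcomm : ∀ i j, i ≠ j →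
      Commute (u i) (u j) ∧ Commute (u i) (v j) ∧ Commute (v i) (v j))
    (hc : ∀ i j, ⁅u i, v i⁆ = ⁅u j, v j⁆) (i : ι) (x : G)
    (hx : x ∈ Set.range u ∪ Set.range v) : Commute ⁅u i, v i⁆ x := by
  rcases hx with ⟨j, rfl⟩ | ⟨j, rfl⟩ <;> obtain ⟨k, hk⟩ := exists_ne j <;> rw [hc i k]
  · exact ((hcomm j k hk.symm).1.commutatorElement_right (hcomm j k hk.symm).2.1).symm
  · exact ((hcomm k j hk).2.1.symm.commutatorElement_right (hcomm j k hk.symm).2.2).symm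

end

theorem stmt_12_general {G : Type*} [Group G] (u v : Fin 8 → G)
    (hcomm : ∀ i j, i ≠ j →
      Commute (u i) (u j) ∧ Commute (u i) (v j) ∧ Commute (v i) (v j))
    (hv2 : ∀ i j, (v i) ^ 2 = (v j) ^ 2)
    (hc : ∀ i j, ⁅u i, v i⁆ = ⁅u j, v j⁆) :
    ⁅u 0, v 0⁆ ^ 2 = 1 ∧
    ∀ g ∈ Subgroup.closure (Set.range u ∪ Set.range v), Commute ⁅u 0, v 0⁆ g := by
  have hcentral : ∀ g ∈ Subgroup.closure (Set.range u ∪ Set.range v), Commute ⁅u 0, v 0⁆ g :=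
    fun _ => Commute.of_mem_closure (commute_commutatorElement_of_mem_generators hcomm hc 0)
  have hu_v_sq : Commute (u 0) (v 0 ^ 2) := by
    rw [hv2 0 1]
    exact (hcomm 0 1 (by decide)).2.1.pow_right 2
  exact ⟨commutatorElement_sq_eq_one
    (hcentral _ (Subgroup.subset_closure (Or.inr ⟨0, rfl⟩))) hu_v_sq, hcentral⟩

theorem stmt_12 {G : Type*} [Group G] (u v : Fin 8 → G)
    (hcomm : ∀ i j, i ≠ j →
      Commute (u i) (u j) ∧ Commute (u i) (v j) ∧ Commute (v i) (v j))
    (hu2 : ∀ i j, (u i) ^ 2 = (u j) ^ 2)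
    (hv2 : ∀ i j, (v i) ^ 2 = (v j) ^ 2)
    (hc : ∀ i j, ⁅u i, v i⁆ = ⁅u j, v j⁆) :
    ⁅u 0, v 0⁆ ^ 2 = 1 ∧
    ∀ g ∈ Subgroup.closure (Set.range u ∪ Set.range v), Commute ⁅u 0, v 0⁆ g :=
  stmt_12_general u v hcomm hv2 hc
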